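/- arXiv:2109.00335 — 6 statements merged into one kernel-verified Lean document; each statement's English description precedes it below -/
import Mathlib

section
/- Let p be an odd prime and G a finite p-group with |γ₂(G)| = p and exp(G) = p. Then either G is extra-special, or G = U × V where U ≤ Z(G) is elementary abelian and V is extra-special. -/
/-- A finite `p`-group is extra-special if its center, commutator subgroup and
Frattini subgroup coincide and have order `p`. -/
def IsExtraspecial (p : ℕ) (G : Type*) [Group G] : Prop :=
  Subgroup.center G = commutator G ∧ commutator G = frattini G ∧
    Nat.card (Subgroup.center G) = p

/-!
The commutator subgroup `K` is normal of order `p` in a `p`-group, hence central, and the centre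
has exponent `p`, i.e. is a vector space over `𝔽_p`; let `U` be a complement of `K` in `Z(G)`.
Take `V` minimal with `UV = G`. As `U` is central, `[V, V] = [G, G] = K` and `Z(V) = Z(G) ∩ V`.
For a group of exponent `p` the Frattini subgroup is the commutator subgroup, and by minimality
`U ∩ V` consists of non-generators of `V`, so `U ∩ V ≤ Φ(V) = K`, whence `U ∩ V = 1` and
`Z(V) = UK ∩ V = K`.
-/

open Subgroup
open scoped commutatorElement

section

variable {G : Type*} [Group G] {p : ℕ} [Fact p.Prime]

theorem IsPGroup.le_center_of_card_eq_prime [Finite G] (hG : IsPGroup p G) {N : Subgroup G}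
    [N.Normal] (hN : Nat.card N = p) : N ≤ center G := by
  set F := MulAction.fixedPoints (ConjAct G) N
  have hF : Nat.card F = p := by
    have hmod : p ≡ Nat.card F [MOD p] :=
      hN ▸ (hG.of_equiv ConjAct.toConjAct).card_modEq_card_fixedPoints N
    have hpos : 0 < Nat.card F := Nat.card_pos_iff.mpr ⟨⟨⟨1, fun g => smul_one g⟩⟩, inferInstance⟩
    have hle : Nat.card F ≤ p := hN ▸ Finite.card_subtype_le _
    have hdvd : p ∣ Nat.card F :=
      Nat.modEq_zero_iff_dvd.mp (hmod.symm.trans (Nat.modEq_zero_iff_dvd.mpr dvd_rfl))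
    exact le_antisymm hle (Nat.le_of_dvd hpos hdvd)
  have hFuniv : F = Set.univ :=
    (Set.eq_univ_iff_ncard F).mpr (by rw [← Nat.card_coe_set_eq, hF, hN])
  intro n hn
  have hfix : (⟨n, hn⟩ : N) ∈ F := hFuniv ▸ Set.mem_univ _
  refine mem_center_iff.mpr fun g => ?_
  have := congrArg Subtype.val (hfix (ConjAct.toConjAct g))
  rwa [ConjAct.Subgroup.val_conj_smul, ConjAct.toConjAct_smul, mul_inv_eq_iff_eq_mul] at this

theorem Subgroup.complementedLattice_of_pow_prime_eq_one {A : Type*} [CommGroup A]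
    (h : ∀ a : A, a ^ p = 1) : ComplementedLattice (Subgroup A) := by
  let := AddCommGroup.zmodModule (G := Additive A) (n := p) h
  exact (Subgroup.toAddSubgroup.trans (AddSubgroup.toZModSubmodule p)).complementedLattice_iff.mpr
    inferInstance

open scoped IsMulCommutative in
theorem Subgroup.exists_inf_eq_bot_sup_eq {H K : Subgroup G} [IsMulCommutative H]
    (hH : ∀ h ∈ H, h ^ p = 1) (hK : K ≤ H) : ∃ U ≤ H, U ⊓ K = ⊥ ∧ U ⊔ K = H := by
  have := complementedLattice_of_pow_prime_eq_one (A := H) fun h => Subtype.ext (hH h h.2)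
  obtain ⟨C, hC⟩ := exists_isCompl (K.subgroupOf H)
  have hKH : (K.subgroupOf H).map H.subtype = K := by
    rw [subgroupOf_map_subtype, inf_of_le_left hK]
  refine ⟨C.map H.subtype, map_subtype_le C, ?_, ?_⟩
  · rw [← hKH, ← map_inf _ _ _ H.subtype_injective, hC.symm.inf_eq_bot, map_bot]
  · rw [← hKH, ← map_sup, hC.symm.sup_eq_top, ← MonoidHom.range_eq_map, range_subtype]

theorem commutator_le_of_isCoatom [Group.IsNilpotent G] {M : Subgroup G} (hM : IsCoatom M) :
    commutator G ≤ M := by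
  have : M.Normal :=
    NormalizerCondition.normal_of_coatom M Group.normalizerCondition_of_isNilpotent hM
  obtain ⟨g, -, hg⟩ := SetLike.exists_of_lt hM.lt_top
  exact Normal.commutator_le_of_self_sup_commutative_eq_top
    (hM.2 _ (left_lt_sup.mpr (zpowers_le.not.mpr hg))) inferInstance

theorem commutator_le_frattini [Group.IsNilpotent G] : commutator G ≤ frattini G :=
  le_iInf₂ fun _ hM => commutator_le_of_isCoatom hM

theorem le_frattini_of_forall_sup_eq_top {N : Subgroup G}
    (h : ∀ K : Subgroup G, K ⊔ N = ⊤ → K = ⊤) : N ≤ frattini G :=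
  le_iInf₂ fun M hM => by_contra fun hN => hM.1 (h M (hM.2 _ (left_lt_sup.mpr hN)))

theorem frattini_eq_bot_of_complementedLattice [ComplementedLattice (Subgroup G)]
    [IsCoatomic (Subgroup G)] : frattini G = ⊥ := by
  obtain ⟨C, hC⟩ := exists_isCompl (frattini G)
  have : C = ⊤ := frattini_nongenerating hC.symm.sup_eq_top
  simpa [this] using hC.inf_eq_bot

theorem frattini_le_commutator_of_pow_prime_eq_one [Finite G] (h : ∀ g : G, g ^ p = 1) :
    frattini G ≤ commutator G := by
  have hsurj : Function.Surjective (Abelianization.of : G →* Abelianization G) :=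
    QuotientGroup.mk_surjective
  have := complementedLattice_of_pow_prime_eq_one fun a => by
    obtain ⟨g, rfl⟩ := hsurj a
    rw [← map_pow, h, map_one]
  have := frattini_le_comap_frattini_of_surjective hsurj
  rwa [frattini_eq_bot_of_complementedLattice (G := Abelianization G), MonoidHom.comap_bot,
    Abelianization.ker_of] at this

theorem frattini_eq_commutator_of_pow_prime_eq_one [Finite G] (h : ∀ g : G, g ^ p = 1) :
    frattini G = commutator G :=
  have : Group.IsNilpotent G := IsPGroup.isNilpotent (p := p) fun g => ⟨1, by simpa using h g⟩
  le_antisymm (frattini_le_commutator_of_pow_prime_eq_one h) commutator_le_frattini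

theorem Subgroup.normal_of_le_center {H : Subgroup G} (h : H ≤ center G) : H.Normal :=
  ⟨fun n hn g => by rw [mem_center_iff.mp (h hn) g, mul_inv_cancel_right]; exact hn⟩

theorem commutatorElement_mul_mul_of_mem_center {v w u u' : G} (hu : u ∈ center G)
    (hu' : u' ∈ center G) : ⁅v * u, w * u'⁆ = ⁅v, w⁆ := by
  have h₁ : v * u * (w * u') = v * w * (u * u') := by
    rw [mul_assoc, ← mul_assoc u, ← mem_center_iff.mp hu w, mul_assoc, ← mul_assoc]
  have h₂ : w * u' * (v * u) = w * v * (u * u') := by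
    rw [mul_assoc, ← mul_assoc u', ← mem_center_iff.mp hu' v, mul_assoc, ← mul_assoc,
      mem_center_iff.mp hu u']
  calc ⁅v * u, w * u'⁆ = v * u * (w * u') * (w * u' * (v * u))⁻¹ := by group
    _ = ⁅v, w⁆ := by rw [h₁, h₂]; group

theorem Subgroup.sup_inf_eq_of_inf_eq_bot {U K V : Subgroup G} [U.Normal] (hKV : K ≤ V)
    (hUV : U ⊓ V = ⊥) : (U ⊔ K) ⊓ V = K := by
  refine le_antisymm (fun x ⟨hx, hxV⟩ => ?_) (le_inf le_sup_right hKV)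
  obtain ⟨u, hu, k, hk, rfl⟩ := mem_sup_of_normal_left.mp hx
  have : u ∈ U ⊓ V := ⟨hu, (mul_mem_cancel_right (hKV hk)).mp hxV⟩
  rw [hUV, mem_bot] at this
  rwa [this, one_mul]

section CentralProduct

variable {U V : Subgroup G}

theorem Subgroup.exists_mul_eq_of_sup_eq_top (hU : U ≤ center G) (h : V ⊔ U = ⊤) (g : G) :
    ∃ v ∈ V, ∃ u ∈ U, v * u = g :=
  have := normal_of_le_center hU
  mem_sup_of_normal_right.mp (h ▸ mem_top g)

theorem map_subtype_commutator_eq_of_sup_eq_top (hU : U ≤ center G) (h : V ⊔ U = ⊤) :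
    (commutator V).map V.subtype = commutator G := by
  rw [commutator_def, map_commutator, ← MonoidHom.range_eq_map, range_subtype, commutator_def]
  refine le_antisymm (commutator_mono le_top le_top) (commutator_le.mpr fun g₁ _ g₂ _ => ?_)
  obtain ⟨v, hv, u, hu, rfl⟩ := exists_mul_eq_of_sup_eq_top hU h g₁
  obtain ⟨w, hw, u', hu', rfl⟩ := exists_mul_eq_of_sup_eq_top hU h g₂
  rw [commutatorElement_mul_mul_of_mem_center (hU hu) (hU hu')]
  exact commutator_mem_commutator hv hw

theorem map_subtype_center_eq_of_sup_eq_top (hU : U ≤ center G) (h : V ⊔ U = ⊤) :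
    (center V).map V.subtype = center G ⊓ V := by
  ext x
  constructor
  · rintro ⟨v, hv, rfl⟩
    refine ⟨mem_center_iff.mpr fun g => ?_, v.2⟩
    obtain ⟨w, hw, u, hu, rfl⟩ := exists_mul_eq_of_sup_eq_top hU h g
    have hvw : w * v = v * w := congrArg Subtype.val (mem_center_iff.mp hv ⟨w, hw⟩)
    have huv : (v : G) * u = u * v := mem_center_iff.mp (hU hu) v
    simp only [coe_subtype]
    rw [mul_assoc, ← huv, ← mul_assoc, hvw, mul_assoc]
  · rintro ⟨hxZ, hxV⟩
    exact ⟨⟨x, hxV⟩, mem_center_iff.mpr fun w => Subtype.ext (mem_center_iff.mp hxZ w), rfl⟩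

theorem Subgroup.subgroupOf_le_frattini_of_minimal (hV : Minimal (fun V => U ⊔ V = ⊤) V) :
    U.subgroupOf V ≤ frattini V := by
  refine le_frattini_of_forall_sup_eq_top fun K hK => ?_
  have hmapK : K.map V.subtype ⊔ U ⊓ V = V := by
    rw [← subgroupOf_map_subtype, ← map_sup, hK, ← MonoidHom.range_eq_map, range_subtype]
  have hUK : U ⊔ K.map V.subtype = ⊤ := by
    refine top_le_iff.mp (hV.prop.ge.trans (sup_le le_sup_left ?_))
    exact hmapK.ge.trans (sup_le le_sup_right (inf_le_left.trans le_sup_left))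
  refine map_injective V.subtype_injective ?_
  rw [← MonoidHom.range_eq_map, range_subtype]
  exact le_antisymm (map_subtype_le K) (hV.le_of_le hUK (map_subtype_le K))

theorem isExtraspecial_and_inf_eq_bot_of_minimal [Finite G] (hexp : ∀ g : G, g ^ p = 1)
    (hcomm : Nat.card (commutator G) = p) (hU : U ≤ center G) (hUK : U ⊓ commutator G = ⊥)
    (hUKZ : U ⊔ commutator G = center G) (hV : Minimal (fun V => U ⊔ V = ⊤) V) :
    IsExtraspecial p V ∧ U ⊓ V = ⊥ := by
  have hsup : V ⊔ U = ⊤ := sup_comm U V ▸ hV.prop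
  have hK := map_subtype_commutator_eq_of_sup_eq_top hU hsup
  have hΦ : frattini V = commutator V :=
    frattini_eq_commutator_of_pow_prime_eq_one fun v => Subtype.ext (hexp v)
  have hUV : U ⊓ V = ⊥ := by
    refine le_bot_iff.mp (hUK ▸ le_inf inf_le_left ?_)
    rw [← subgroupOf_map_subtype, ← hK, ← hΦ]
    exact map_mono (subgroupOf_le_frattini_of_minimal hV)
  have hZ : (center V).map V.subtype = commutator G := by
    have := normal_of_le_center hU
    rw [map_subtype_center_eq_of_sup_eq_top hU hsup, ← hUKZ]
    exact sup_inf_eq_of_inf_eq_bot (hK ▸ map_subtype_le _) hUV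
  refine ⟨⟨map_injective V.subtype_injective (hZ.trans hK.symm), hΦ.symm, ?_⟩, hUV⟩
  rw [← hcomm, ← hZ, card_map_of_injective V.subtype_injective]

end CentralProduct

end

theorem stmt1_general {p : ℕ} [Fact p.Prime] {G : Type*} [Group G] [Finite G]
    (hG : IsPGroup p G)
    (hcomm : Nat.card (commutator G) = p)
    (hexp : Monoid.exponent G = p) :
    IsExtraspecial p G ∨
      ∃ U V : Subgroup G,
        U ≤ Subgroup.center G ∧ (∀ u ∈ U, u ^ p = 1) ∧
        IsExtraspecial p V ∧
        U ⊓ V = ⊥ ∧ U ⊔ V = ⊤ := by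
  have hpow (g : G) : g ^ p = 1 := hexp ▸ Monoid.pow_exponent_eq_one g
  obtain ⟨U, hUZ, hUK, hUKZ⟩ := exists_inf_eq_bot_sup_eq (fun z _ => hpow z)
    (hG.le_center_of_card_eq_prime hcomm)
  obtain ⟨V, hV⟩ := exists_minimal_of_wellFoundedLT (fun V => U ⊔ V = ⊤) ⟨⊤, sup_top_eq U⟩
  obtain ⟨hVext, hUV⟩ := isExtraspecial_and_inf_eq_bot_of_minimal hpow hcomm hUZ hUK hUKZ hV
  exact Or.inr ⟨U, V, hUZ, fun u _ => hpow u, hVext, hUV, hV.prop⟩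

/-- Let `p` be an odd prime and `G` a finite `p`-group with
`|γ₂(G)| = p` and `exp(G) = p`.  Then either `G` is extra-special, or
`G = U × V` (internal direct product) where `U ≤ Z(G)` is elementary abelian
and `V` is extra-special. -/
theorem stmt1 {p : ℕ} [Fact p.Prime] (hodd : Odd p) {G : Type*} [Group G] [Finite G]
    (hG : IsPGroup p G)
    (hcomm : Nat.card (commutator G) = p)
    (hexp : Monoid.exponent G = p) :
    IsExtraspecial p G ∨
      ∃ U V : Subgroup G,
        U ≤ Subgroup.center G ∧ (∀ u ∈ U, u ^ p = 1) ∧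
        IsExtraspecial p V ∧
        U ⊓ V = ⊥ ∧ U ⊔ V = ⊤ :=
  stmt1_general hG hcomm hexp
end

section
/- Let G be a finite p-group and 1 ≠ N a proper normal subgroup of G with C_G(Z(N)) = N. Then Z(G) is properly contained in Z(N), and Z(N) = C_G(N). -/
/-- Let `G` be a finite `p`-group and `1 ≠ N` a proper normal subgroup
of `G` with `C_G(Z(N)) = N`.  Then `Z(G)` is properly contained in `Z(N)`, and
`Z(N) = C_G(N)`.  Here `Z(N)`, viewed as a subgroup of `G`, is
`Subgroup.centralizer ↑N ⊓ N`. -/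
theorem stmt5 {p : ℕ} [Fact p.Prime] {G : Type*} [Group G] [Finite G]
    (hG : IsPGroup p G) (N : Subgroup G) (hnormal : N.Normal)
    (hbot : N ≠ ⊥) (htop : N ≠ ⊤)
    (hcent : Subgroup.centralizer ((Subgroup.centralizer (N : Set G) ⊓ N : Subgroup G) : Set G) = N) :
    Subgroup.center G < Subgroup.centralizer (N : Set G) ⊓ N ∧
      Subgroup.centralizer (N : Set G) ⊓ N = Subgroup.centralizer (N : Set G) := by
  have hcen_le : ∀ (s : Set G), Subgroup.center G ≤ Subgroup.centralizer s := by
    intro s x hx y _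
    exact Subgroup.mem_center_iff.mp hx y
  have hZN_le_N : (Subgroup.centralizer (N : Set G) ⊓ N : Subgroup G) ≤ N := inf_le_right
  have hCN_le_N : Subgroup.centralizer (N : Set G) ≤ N := by
    calc Subgroup.centralizer (N : Set G)
        ≤ Subgroup.centralizer ((Subgroup.centralizer (N : Set G) ⊓ N : Subgroup G) : Set G) :=
          Subgroup.centralizer_le (by exact_mod_cast hZN_le_N)
      _ = N := hcent
  constructor
  · refine lt_of_le_of_ne (le_inf (hcen_le _) ?_) ?_
    · rw [← hcent]; exact hcen_le _
    · intro h
      have h2 : Subgroup.centralizer ((Subgroup.center G : Subgroup G) : Set G) = N := by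
        rw [h]; exact hcent
      rw [Subgroup.centralizer_eq_top_iff_subset.mpr subset_rfl] at h2
      exact htop h2.symm
  · exact inf_eq_left.mpr hCN_le_N
end

section
/- Let p be a prime and G a finite nonabelian p-group. Let Z₂*(G) = {a ∈ Z₂(G) : a^p ∈ Z(G)}, and assume the class of G is at most p. Then Z₂*(G) ≤ C_G(Φ(G)). -/
/-!
For `a ∈ Z₂(G)` every commutator `⁅a, g⁆` is central, so `⁅a, g ^ n⁆ = ⁅a, g⁆ ^ n = ⁅a ^ n, g⁆`;
if moreover `a ^ p` is central, this gives `⁅a, g ^ p⁆ = 1` (Mann). By the three subgroups lemma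
`a` also centralizes `γ₂(G)`. Hence the centralizer of `a` contains every commutator and every
`p`-th power, and such a subgroup contains `Φ(G)`: a subgroup maximal among those containing it
and avoiding a given element is normal with elementary abelian quotient, hence maximal.
-/

open scoped commutatorElement

section

variable {G : Type*} [Group G]

section CommutatorPow

variable {a g : G}

theorem commutatorElement_pow_right (h : Commute ⁅a, g⁆ g) (n : ℕ) :
    ⁅a, g ^ n⁆ = ⁅a, g⁆ ^ n := by
  have hconj : a * g * a⁻¹ = ⁅a, g⁆ * g := by rw [commutatorElement_def]; group
  rw [commutatorElement_def, ← conj_pow, hconj, h.mul_pow, mul_inv_cancel_right]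

theorem commutatorElement_pow_left (h : Commute ⁅a, g⁆ a) (n : ℕ) :
    ⁅a ^ n, g⁆ = ⁅a, g⁆ ^ n := by
  have h' : Commute ⁅g, a⁆ a := by rw [← commutatorElement_inv]; exact h.inv_left
  rw [← commutatorElement_inv, commutatorElement_pow_right h', ← commutatorElement_inv g a,
    inv_pow]

end CommutatorPow

namespace Subgroup

theorem commutatorElement_mem_center_of_mem_upperCentralSeries_two {a : G}
    (ha : a ∈ upperCentralSeries G 2) (g : G) : ⁅a, g⁆ ∈ center G :=
  upperCentralSeries_one G ▸ mem_upperCentralSeries_succ_iff.mp ha g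

theorem upperCentralSeries_two_le_centralizer_commutator :
    upperCentralSeries G 2 ≤ centralizer (_root_.commutator G) := by
  rw [← commutator_eq_bot_iff_le_centralizer, _root_.commutator_def, commutator_comm]
  have hZ₂ : ⁅⁅upperCentralSeries G 2, (⊤ : Subgroup G)⁆, (⊤ : Subgroup G)⁆ = ⊥ := by
    rw [commutator_top_right_eq_bot_iff_le_center, ← upperCentralSeries_one]
    exact commutator_upperCentralSeries_top_le G 1
  exact commutator_commutator_eq_bot_of_rotate
    (by rwa [commutator_comm ⊤ (upperCentralSeries G 2)]) hZ₂

theorem commute_pow_of_mem_upperCentralSeries_two {a : G} (ha : a ∈ upperCentralSeries G 2)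
    {n : ℕ} (han : a ^ n ∈ center G) (g : G) : Commute a (g ^ n) := by
  have hc := commutatorElement_mem_center_of_mem_upperCentralSeries_two ha g
  rw [← commutatorElement_eq_one_iff_commute,
    commutatorElement_pow_right (mem_center_iff.mp hc g).symm,
    ← commutatorElement_pow_left (mem_center_iff.mp hc a).symm,
    commutatorElement_eq_one_iff_commute]
  exact (mem_center_iff.mp han g).symm

theorem exists_le_maximal_notMem {K : Subgroup G} {h : G} (hK : h ∉ K) :
    ∃ M, K ≤ M ∧ Maximal (fun M : Subgroup G => h ∉ M) M := by
  refine zorn_le_nonempty₀ {M : Subgroup G | h ∉ M} (fun c hc hchain M hM => ?_) K hK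
  refine ⟨sSup c, ?_, fun _ => le_sSup⟩
  rw [Set.mem_ofPred_eq, mem_sSup_of_directedOn ⟨M, hM⟩ hchain.directedOn]
  rintro ⟨N, hN, hhN⟩
  exact hc hN hhN

variable {p : ℕ} [hp : Fact p.Prime]

theorem mem_of_pow_mem_of_zpow_mem {H : Subgroup G} {y : G} {j : ℤ}
    (hj : ¬ (p : ℤ) ∣ j) (hyp : y ^ p ∈ H) (hyj : y ^ j ∈ H) : y ∈ H := by
  obtain ⟨u, v, huv⟩ := (Nat.prime_iff_prime_int.mp hp.out).coprime_iff_not_dvd.mpr hj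
  have hy : y = (y ^ p) ^ u * (y ^ j) ^ v := by
    rw [← zpow_natCast, ← zpow_mul, ← zpow_mul, ← zpow_add, mul_comm _ u, mul_comm j v, huv,
      zpow_one]
  rw [hy]
  exact H.mul_mem (H.zpow_mem hyp u) (H.zpow_mem hyj v)

/- For `y ∉ M`, maximality puts `h = m * y ^ j` in `M ⊔ zpowers y`; then `p ∤ j` since
`h ∉ M`, so `y ∈ M ⊔ zpowers h`. -/
theorem isCoatom_of_maximal_notMem {M : Subgroup G} [M.Normal]
    (hpow : ∀ y : G, y ^ p ∈ M) {h : G} (hM : Maximal (fun M : Subgroup G => h ∉ M) M) :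
    IsCoatom M := by
  have hgen : ∀ y, y ∈ M ⊔ zpowers h := by
    intro y
    by_cases hy : y ∈ M
    · exact mem_sup_left hy
    have hlt : M < M ⊔ zpowers y := left_lt_sup.mpr (by rwa [zpowers_le])
    have hh : h ∈ ((M ⊔ zpowers y : Subgroup G) : Set G) := not_not.mp (hM.not_prop_of_gt hlt)
    rw [normal_mul] at hh
    obtain ⟨m, hm, _, ⟨j, rfl⟩, rfl⟩ := hh
    refine mem_of_pow_mem_of_zpow_mem (j := j) ?_ (mem_sup_left (hpow y)) ?_
    · rintro ⟨t, rfl⟩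
      refine hM.prop (M.mul_mem hm ?_)
      simp only [zpow_mul, zpow_natCast]
      exact M.zpow_mem (hpow y) t
    · simpa using mul_mem (mem_sup_left (M.inv_mem hm)) (mem_sup_right (mem_zpowers (m * y ^ j)))
  refine ⟨fun hM_top => hM.prop (hM_top ▸ mem_top h), fun H hMH => ?_⟩
  have hhH : h ∈ H := not_not.mp (hM.not_prop_of_gt hMH)
  exact eq_top_iff.mpr fun y _ => sup_le hMH.le (zpowers_le.mpr hhH) (hgen y)

end Subgroup

theorem frattini_le_of_commutator_le_of_pow_mem {p : ℕ} [Fact p.Prime] {K : Subgroup G}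
    (hcomm : commutator G ≤ K) (hpow : ∀ g : G, g ^ p ∈ K) : frattini G ≤ K := by
  intro h hΦ
  by_contra hhK
  obtain ⟨M, hKM, hM⟩ := Subgroup.exists_le_maximal_notMem hhK
  have : M.Normal := Subgroup.commutator_top_left_le_iff.mp
    ((Subgroup.commutator_mono le_rfl le_top).trans (hcomm.trans hKM))
  have hMmax : IsCoatom M := Subgroup.isCoatom_of_maximal_notMem (fun y => hKM (hpow y)) hM
  exact hM.prop (frattini_le_coatom hMmax hΦ)

end

theorem stmt6_general {p : ℕ} [Fact p.Prime] {G : Type*} [Group G] :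
    ∀ a ∈ upperCentralSeries G 2, a ^ p ∈ Subgroup.center G →
      a ∈ Subgroup.centralizer ((frattini G : Subgroup G) : Set G) := by
  intro a ha hap
  have hcomm : commutator G ≤ Subgroup.centralizer {a} :=
    (Subgroup.le_centralizer_iff.mp Subgroup.upperCentralSeries_two_le_centralizer_commutator).trans
      (Subgroup.centralizer_le (Set.singleton_subset_iff.mpr ha))
  have hpow (g : G) : g ^ p ∈ Subgroup.centralizer {a} :=
    Subgroup.mem_centralizer_singleton_iff.mpr
      (Subgroup.commute_pow_of_mem_upperCentralSeries_two ha hap g).symm.eq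
  have hΦ := frattini_le_of_commutator_le_of_pow_mem hcomm hpow
  exact Subgroup.mem_centralizer_iff.mpr fun h hh =>
    Subgroup.mem_centralizer_singleton_iff.mp (hΦ hh)

/-- Let `p` be a prime and `G` a finite nonabelian `p`-group of
nilpotency class at most `p`.  Let `Z₂*(G) = {a ∈ Z₂(G) : a^p ∈ Z(G)}`.
Then `Z₂*(G) ≤ C_G(Φ(G))`, where `Φ(G)` is the Frattini subgroup. -/
theorem stmt6 {p : ℕ} [Fact p.Prime] {G : Type*} [Group G] [Finite G]
    (hG : IsPGroup p G) (hna : ¬ ∀ a b : G, a * b = b * a)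
    [Group.IsNilpotent G] (hclass : Group.nilpotencyClass G ≤ p) :
    ∀ a ∈ upperCentralSeries G 2, a ^ p ∈ Subgroup.center G →
      a ∈ Subgroup.centralizer ((frattini G : Subgroup G) : Set G) :=
  stmt6_general
end

section
/- Let N be a normal subgroup of a group G. There is a group isomorphism φ from Z¹(G/N, Z(N)) to C_{Aut(G)}(G/N, N) given by g^{φ(f)} = g·f(gN), and the image of B¹(G/N, Z(N)) under φ is the group of inner automorphisms of G induced by elements of Z(N). -/
/-!
The cocycle identity of `f : G/N → Z(N)` says exactly that `g ↦ g · f(gN)` is multiplicative,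
and since `f` takes values in `N` this map fixes `N` and every coset of `N`.
Conversely, if `α` fixes `N` pointwise, comparing `α (g n g⁻¹) = g n g⁻¹` with
`α g · n · (α g)⁻¹` shows that `g⁻¹ · α g` centralizes `N`; hence it only depends on `gN`,
and `gN ↦ g⁻¹ · α g` is the inverse derivation. For `m ∈ Z(N)` the element `m` commutes with
`g⁻¹ m g ∈ N`, so `m g m⁻¹ = g · m⁻¹ (g⁻¹ m g)`: conjugation by `m` is the image of the
principal derivation of `m`.
-/

open Subgroup

namespace QuotientGroup

variable {G : Type*} [Group G] (N : Subgroup G)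

/-- `Z¹(G/N, Z(N))`, for the right conjugation action `x ↦ h⁻¹ x h` of `G/N` on `Z(N)`. -/
abbrev CentralDerivation :=
  {f : G ⧸ N → G // (∀ q, f q ∈ centralizer (N : Set G) ⊓ N) ∧
    ∀ g h : G, f (mk (g * h)) = h⁻¹ * f (mk g) * h * f (mk h)}

/-- `C_{Aut(G)}(G/N, N)`. -/
abbrev CentralizingAut :=
  {α : MulAut G // (∀ x ∈ N, α x = x) ∧ ∀ g : G, g⁻¹ * α g ∈ N}

variable {N}

namespace CentralDerivation

lemma apply_mk_of_mem (f : CentralDerivation N) {x : G} (hx : x ∈ N) : f.1 (mk x) = 1 := by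
  have h := f.2.2 1 1
  rw [mul_one, inv_one, one_mul, mul_one, left_eq_mul] at h
  rwa [← one_mul x, mk_mul_of_mem 1 hx]

lemma mk_mul_apply (f : CentralDerivation N) (g : G) : (mk (g * f.1 (mk g)) : G ⧸ N) = mk g :=
  mk_mul_of_mem g (f.2.1 _).2

def toMulAut (f : CentralDerivation N) : MulAut G where
  toFun g := g * f.1 (mk g)
  invFun g := g * (f.1 (mk g))⁻¹
  left_inv g := by simp only [mk_mul_apply, mul_inv_cancel_right]
  right_inv g := by simp only [mk_mul_of_mem g (N.inv_mem (f.2.1 _).2), inv_mul_cancel_right]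
  map_mul' g h := by
    simp only [f.2.2 g h]
    group

@[simp]
lemma toMulAut_apply (f : CentralDerivation N) (g : G) : f.toMulAut g = g * f.1 (mk g) := rfl

lemma toMulAut_mul_apply (f₁ f₂ : CentralDerivation N) (g : G) :
    (f₁.toMulAut * f₂.toMulAut) g = g * (f₁.1 (mk g) * f₂.1 (mk g)) := by
  rw [MulAut.mul_apply, toMulAut_apply, toMulAut_apply, mk_mul_apply, mul_assoc,
    (f₁.2.1 (mk g)).1 _ (f₂.2.1 (mk g)).2]

end CentralDerivation

section FixingNormalSubgroup

variable [N.Normal] {F : Type*} [FunLike F G G] [MonoidHomClass F G G] {α : F}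

lemma inv_mul_map_mem_centralizer (hα : ∀ x ∈ N, α x = x) (g : G) :
    g⁻¹ * α g ∈ centralizer (N : Set G) := by
  refine mem_centralizer_iff.mpr fun n hn => ?_
  have hconj : α g * n * (α g)⁻¹ = g * n * g⁻¹ := by
    rw [← hα n hn, ← map_inv, ← map_mul, ← map_mul, hα n hn, hα _ (Normal.conj_mem ‹_› n hn g)]
  calc n * (g⁻¹ * α g)
      = g⁻¹ * (g * n * g⁻¹) * α g := by group
    _ = g⁻¹ * (α g * n * (α g)⁻¹) * α g := by rw [hconj]
    _ = g⁻¹ * α g * n := by group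

lemma inv_mul_map_mul_of_mem (hα : ∀ x ∈ N, α x = x) (g : G) {k : G} (hk : k ∈ N) :
    (g * k)⁻¹ * α (g * k) = g⁻¹ * α g := by
  calc (g * k)⁻¹ * α (g * k)
      = k⁻¹ * (g⁻¹ * α g * k) := by rw [map_mul, hα k hk]; group
    _ = k⁻¹ * (k * (g⁻¹ * α g)) := by rw [inv_mul_map_mem_centralizer hα g k hk]
    _ = g⁻¹ * α g := inv_mul_cancel_left k _

end FixingNormalSubgroup

namespace CentralizingAut

variable [N.Normal]

def toCentralDerivation (α : CentralizingAut N) : CentralDerivation N where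
  val q := q.liftOn' (fun g => g⁻¹ * α.1 g) fun a b hab => by
    rw [← inv_mul_map_mul_of_mem α.2.1 a (leftRel_apply.mp hab), mul_inv_cancel_left]
  property := by
    refine ⟨fun q => q.induction_on fun g => ⟨inv_mul_map_mem_centralizer α.2.1 g, α.2.2 g⟩,
      fun g h => ?_⟩
    change (g * h)⁻¹ * α.1 (g * h) = h⁻¹ * (g⁻¹ * α.1 g) * h * (h⁻¹ * α.1 h)
    rw [map_mul]
    group

end CentralizingAut

variable (N) in
def centralDerivationEquiv [N.Normal] : CentralDerivation N ≃ CentralizingAut N where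
  toFun f := ⟨f.toMulAut, fun x hx => by rw [CentralDerivation.toMulAut_apply,
    f.apply_mk_of_mem hx, mul_one], fun g => by simpa using (f.2.1 (mk g)).2⟩
  invFun := CentralizingAut.toCentralDerivation
  left_inv f := Subtype.ext <| funext fun q => by
    induction q using induction_on with
    | H g => exact inv_mul_cancel_left g _
  right_inv α := Subtype.ext <| MulEquiv.ext fun g => mul_inv_cancel_left g _

lemma conj_apply_eq_mul_inv_mul_conj [N.Normal] {m : G} (hm : m ∈ centralizer (N : Set G) ⊓ N)
    (g : G) : MulAut.conj m g = g * (m⁻¹ * (g⁻¹ * m * g)) := by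
  have hmem : g⁻¹ * m * g ∈ N := by simpa using Normal.conj_mem ‹_› m hm.2 g⁻¹
  have hcomm : Commute m (g⁻¹ * m * g) := (hm.1 _ hmem).symm
  rw [hcomm.inv_left.eq, MulAut.conj_apply]
  group

end QuotientGroup

/-- Let `N` be a normal subgroup of a group `G`, and let
`Z(N) = C_G(N) ⊓ N` (as a subgroup of `G`), a `G/N`-module via conjugation.
There is a group isomorphism `φ` from the group `Z¹(G/N, Z(N))` of derivations
(crossed homomorphisms, with pointwise multiplication) to
`C_{Aut(G)}(G/N, N)` (automorphisms fixing `N` elementwise and acting trivially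
mod `N`, under composition), given by `g^{φ(f)} = g·f(gN)`; and the image of
`B¹(G/N, Z(N))` (principal derivations) under `φ` is the group of inner
automorphisms of `G` induced by elements of `Z(N)`. -/
theorem stmt14 {G : Type*} [Group G] (N : Subgroup G) [N.Normal] :
    ∃ φ : {f : G ⧸ N → G //
            (∀ q, f q ∈ Subgroup.centralizer (N : Set G) ⊓ N) ∧
            ∀ g h : G, f (QuotientGroup.mk (g * h)) =
              h⁻¹ * f (QuotientGroup.mk g) * h * f (QuotientGroup.mk h)} ≃
          {α : MulAut G // (∀ x ∈ N, α x = x) ∧ ∀ g : G, g⁻¹ * α g ∈ N},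
      (∀ f (g : G), ((φ f : MulAut G) : G ≃* G) g = g * f.1 (QuotientGroup.mk g)) ∧
      (∀ f₁ f₂ (g : G), (((φ f₁ : MulAut G) * (φ f₂ : MulAut G)) : G ≃* G) g =
        g * (f₁.1 (QuotientGroup.mk g) * f₂.1 (QuotientGroup.mk g))) ∧
      (∀ f, (∃ m ∈ Subgroup.centralizer (N : Set G) ⊓ N,
              ∀ g : G, f.1 (QuotientGroup.mk g) = m⁻¹ * (g⁻¹ * m * g)) ↔
            ∃ m ∈ Subgroup.centralizer (N : Set G) ⊓ N,
              (φ f : MulAut G) = MulAut.conj m) := by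
  open QuotientGroup in
  refine ⟨centralDerivationEquiv N, fun f g => rfl, CentralDerivation.toMulAut_mul_apply,
    fun f => exists_congr fun m => and_congr_right fun hm => ?_⟩
  change _ ↔ CentralDerivation.toMulAut (N := N) f = MulAut.conj m
  rw [MulEquiv.ext_iff]
  refine forall_congr' fun g => ?_
  rw [CentralDerivation.toMulAut_apply, conj_apply_eq_mul_inv_mul_conj hm, mul_right_inj]
end

section
/- Let G be a finite p-group, N a normal subgroup with C_G(N) = Z(N), A = Ω₁(Z(N)), A* = {a ∈ Z(N) : a^p ∈ Z(G)}. Suppose every automorphism of G of order p fixing N elementwise is inner. Then for all i ≥ 1, Z¹(G/N, A ∩ Z_i(G)) ≅ (A* ∩ Z_{i+1}(G))/Z(G). -/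
/-!
A derivation `f : G/N → G` with values in `N` gives the automorphism `x ↦ x * f x̄` of `G`,
which fixes `N` pointwise and whose `k`-th power is `x ↦ x * (f x̄) ^ k`. If the values of `f`
have order dividing `p`, this automorphism has order dividing `p`, so it is conjugation by some
`g`; then `g` centralizes `N` and `f` is the inner derivation `x̄ ↦ x⁻¹ g x g⁻¹`.
Conversely, for `g ∈ C_G(N)` the inner derivation of `g` has values in `Z_i(G)` iff
`g ∈ Z_{i+1}(G)`, and values of order dividing `p` iff `g ^ p ∈ Z(G)`. As `C_G(N) = Z(N)` is
abelian, `g ↦ (x̄ ↦ x⁻¹ g x g⁻¹)` is a homomorphism on `A* ∩ Z_{i+1}(G)` whose kernel is its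
intersection with `Z(G)`, so its image, the group of derivations in question, is isomorphic to
the image of `A* ∩ Z_{i+1}(G)` in `G/Z(G)`.
-/

noncomputable def MonoidHom.rangeMulEquivOfKerEq {H M M' : Type*} [Group H] [Group M]
    [Group M'] (φ : H →* M) (ψ : H →* M') (h : φ.ker = ψ.ker) : φ.range ≃* ψ.range :=
  (QuotientGroup.quotientKerEquivRange φ).symm.trans
    ((QuotientGroup.quotientMulEquivOfEq h).trans (QuotientGroup.quotientKerEquivRange ψ))

section

open Subgroup
open scoped commutatorElement

variable {G : Type*} [Group G]

theorem mem_closure_setOf_pow_mem_iff {H : Subgroup G}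
    (hH : ∀ a ∈ H, ∀ b ∈ H, Commute a b) (K : Subgroup G) (n : ℕ) {x : G} :
    x ∈ closure {y | y ∈ H ∧ y ^ n ∈ K} ↔ x ∈ H ∧ x ^ n ∈ K := by
  refine ⟨fun hx => ?_, fun hx => subset_closure hx⟩
  induction hx using closure_induction with
  | mem y hy => exact hy
  | one => simp
  | mul a b _ _ ha hb =>
    exact ⟨mul_mem ha.1 hb.1, (hH a ha.1 b hb.1).mul_pow n ▸ mul_mem ha.2 hb.2⟩
  | inv a _ ha => exact ⟨inv_mem ha.1, (inv_pow a n).symm ▸ inv_mem ha.2⟩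

variable {N : Subgroup G}

theorem MulAut.exists_eq_conj_of_pow_eq_one {p : ℕ} [Fact p.Prime]
    (hinner : ∀ α : MulAut G, orderOf α = p → (∀ x ∈ N, α x = x) → ∃ g : G, α = MulAut.conj g)
    {α : MulAut G} (hαp : α ^ p = 1) (hαN : ∀ x ∈ N, α x = x) : ∃ g : G, α = MulAut.conj g := by
  by_cases hα : α = 1
  · exact ⟨1, by rw [hα, map_one]⟩
  · exact hinner α (orderOf_eq_prime hαp hα) hαN

theorem commute_of_mem_centralizer (hCN : centralizer (N : Set G) ≤ N) {a b : G}
    (ha : a ∈ centralizer (N : Set G)) (hb : b ∈ centralizer (N : Set G)) : Commute a b :=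
  (mem_centralizer_iff.mp ha b (hCN hb)).symm

def IsDerivation (f : G ⧸ N → G) : Prop :=
  ∀ g h : G, f (QuotientGroup.mk (g * h)) =
    h⁻¹ * f (QuotientGroup.mk g) * h * f (QuotientGroup.mk h)

namespace IsDerivation

variable {f : G ⧸ N → G}

theorem map_one (hf : IsDerivation f) : f (QuotientGroup.mk 1) = 1 := by
  simpa using hf 1 1

theorem apply_eq_one_of_mem (hf : IsDerivation f) {n : G} (hn : n ∈ N) : f n = 1 := by
  have hn1 : (n : G ⧸ N) = QuotientGroup.mk 1 := QuotientGroup.eq.mpr (by simpa using hn)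
  rw [hn1, hf.map_one]

noncomputable def toMulAut (hf : IsDerivation f) (hfN : ∀ q, f q ∈ N) : MulAut G where
  toFun x := x * f x
  invFun x := x * (f x)⁻¹
  left_inv x := by simp [QuotientGroup.mk_mul_of_mem x (hfN x)]
  right_inv x := by simp [QuotientGroup.mk_mul_of_mem x (inv_mem (hfN x))]
  map_mul' x y := by rw [hf x y]; group

variable (hf : IsDerivation f) (hfN : ∀ q, f q ∈ N)

theorem toMulAut_apply (x : G) : hf.toMulAut hfN x = x * f x := rfl

theorem toMulAut_apply_of_mem {x : G} (hx : x ∈ N) : hf.toMulAut hfN x = x := by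
  rw [toMulAut_apply, hf.apply_eq_one_of_mem hx, mul_one]

theorem toMulAut_pow_apply (k : ℕ) (x : G) : (hf.toMulAut hfN ^ k) x = x * f x ^ k := by
  induction k with
  | zero => simp
  | succ k ih =>
    rw [pow_succ', MulAut.mul_apply, ih, map_mul, toMulAut_apply,
      hf.toMulAut_apply_of_mem hfN (pow_mem (hfN x) k), pow_succ', mul_assoc]

theorem toMulAut_pow_eq_one {n : ℕ} (hfn : ∀ q, f q ^ n = 1) : hf.toMulAut hfN ^ n = 1 :=
  MulEquiv.ext fun x => by
    rw [toMulAut_pow_apply, QuotientGroup.mk_surjective.forall.mp hfn x, mul_one,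
      MulAut.one_apply]

end IsDerivation

variable [N.Normal]

theorem inv_mul_mul_mul_inv_mem_centralizer {g : G} (hg : g ∈ centralizer (N : Set G)) (x : G) :
    x⁻¹ * g * x * g⁻¹ ∈ centralizer (N : Set G) :=
  mul_mem (by simpa using (normal_centralizer (H := N)).conj_mem g hg x⁻¹) (inv_mem hg)

noncomputable def innerDerivation (g : G) (hg : g ∈ centralizer (N : Set G)) : G ⧸ N → G :=
  Quotient.lift (fun x => x⁻¹ * g * x * g⁻¹) fun x y hxy => by
    obtain ⟨n, hn, rfl⟩ : ∃ n ∈ N, y = x * n :=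
      ⟨x⁻¹ * y, QuotientGroup.leftRel_apply.mp hxy, by group⟩
    have hgn : g * n * g⁻¹ = n := mul_inv_eq_of_eq_mul (mem_centralizer_iff.mp hg n hn).symm
    have hcn := mem_centralizer_iff.mp (inv_mul_mul_mul_inv_mem_centralizer hg x) n hn
    calc x⁻¹ * g * x * g⁻¹ = n⁻¹ * ((x⁻¹ * g * x * g⁻¹) * (g * n * g⁻¹)) := by
          rw [hgn, ← hcn, inv_mul_cancel_left]
      _ = (x * n)⁻¹ * g * (x * n) * g⁻¹ := by group

@[simp]
theorem innerDerivation_mk {g : G} (hg : g ∈ centralizer (N : Set G)) (x : G) :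
    innerDerivation g hg x = x⁻¹ * g * x * g⁻¹ := rfl

theorem innerDerivation_mem_centralizer {g : G} (hg : g ∈ centralizer (N : Set G))
    (q : G ⧸ N) : innerDerivation g hg q ∈ centralizer (N : Set G) :=
  QuotientGroup.induction_on q (inv_mul_mul_mul_inv_mem_centralizer hg)

theorem isDerivation_innerDerivation {g : G} (hg : g ∈ centralizer (N : Set G)) :
    IsDerivation (innerDerivation g hg) := by
  intro x y
  simp only [innerDerivation_mk]
  group

theorem forall_innerDerivation_mem_upperCentralSeries_iff {g : G}
    (hg : g ∈ centralizer (N : Set G)) (i : ℕ) :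
    (∀ q, innerDerivation g hg q ∈ Subgroup.upperCentralSeries G i) ↔
      g ∈ Subgroup.upperCentralSeries G (i + 1) := by
  rw [Subgroup.mem_upperCentralSeries_succ_iff, QuotientGroup.mk_surjective.forall]
  refine (Equiv.inv G).forall_congr fun {x} => ?_
  have hcomm : (x⁻¹ * g * x * g⁻¹)⁻¹ = ⁅g, x⁻¹⁆ := by rw [commutatorElement_def]; group
  rw [Equiv.inv_apply, innerDerivation_mk, ← inv_mem_iff, hcomm]

theorem forall_innerDerivation_pow_eq_one_iff (hCN : centralizer (N : Set G) ≤ N) {g : G}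
    (hg : g ∈ centralizer (N : Set G)) (n : ℕ) :
    (∀ q, innerDerivation g hg q ^ n = 1) ↔ g ^ n ∈ center G := by
  rw [mem_center_iff, QuotientGroup.mk_surjective.forall]
  refine forall_congr' fun x => ?_
  have hx : x⁻¹ * g * x ∈ centralizer (N : Set G) := by
    simpa using (normal_centralizer (H := N)).conj_mem g hg x⁻¹
  have hpow : (x⁻¹ * g * x * g⁻¹) ^ n = x⁻¹ * g ^ n * x * (g ^ n)⁻¹ := by
    rw [(commute_of_mem_centralizer hCN hx (inv_mem hg)).mul_pow, inv_pow]
    simpa using congrArg (· * (g ^ n)⁻¹) (conj_pow (a := x⁻¹) (b := g) (i := n))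
  rw [innerDerivation_mk, hpow, mul_inv_eq_one, mul_assoc, inv_mul_eq_iff_eq_mul, eq_comm]

noncomputable def innerDerivationHom (hCN : centralizer (N : Set G) ≤ N) {S : Subgroup G}
    (hS : S ≤ centralizer (N : Set G)) : S →* (G ⧸ N → G) where
  toFun g := innerDerivation g (hS g.2)
  map_one' := funext fun q => QuotientGroup.induction_on q fun x => by simp
  map_mul' := fun ⟨g, hg⟩ ⟨h, hh⟩ => funext fun q => QuotientGroup.induction_on q fun x => by
    have hgc : g * (x⁻¹ * h * x * h⁻¹) * g⁻¹ = x⁻¹ * h * x * h⁻¹ := by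
      rw [(commute_of_mem_centralizer hCN (hS hg)
        (inv_mul_mul_mul_inv_mem_centralizer (hS hh) x)).eq, mul_inv_cancel_right]
    calc x⁻¹ * (g * h) * x * (g * h)⁻¹
        = x⁻¹ * g * x * g⁻¹ * (g * (x⁻¹ * h * x * h⁻¹) * g⁻¹) := by group
      _ = x⁻¹ * g * x * g⁻¹ * (x⁻¹ * h * x * h⁻¹) := by rw [hgc]

@[simp]
theorem innerDerivationHom_apply (hCN : centralizer (N : Set G) ≤ N) {S : Subgroup G}
    (hS : S ≤ centralizer (N : Set G)) (g : S) :
    innerDerivationHom hCN hS g = innerDerivation (N := N) g (hS g.2) := rfl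

theorem ker_innerDerivationHom (hCN : centralizer (N : Set G) ≤ N) {S : Subgroup G}
    (hS : S ≤ centralizer (N : Set G)) :
    (innerDerivationHom hCN hS).ker = ((QuotientGroup.mk' (center G)).comp S.subtype).ker := by
  ext g
  simpa [funext_iff] using forall_innerDerivation_pow_eq_one_iff hCN (hS g.2) 1

theorem IsDerivation.exists_innerDerivation_eq {p : ℕ} [Fact p.Prime]
    (hinner : ∀ α : MulAut G, orderOf α = p → (∀ x ∈ N, α x = x) → ∃ g : G, α = MulAut.conj g)
    {f : G ⧸ N → G} (hf : IsDerivation f) (hfN : ∀ q, f q ∈ N) (hfp : ∀ q, f q ^ p = 1) :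
    ∃ g, ∃ hg : g ∈ centralizer (N : Set G), innerDerivation g hg = f := by
  obtain ⟨g, hg⟩ := MulAut.exists_eq_conj_of_pow_eq_one hinner (hf.toMulAut_pow_eq_one hfN hfp)
    fun x hx => hf.toMulAut_apply_of_mem hfN hx
  have hconj (x : G) : g * x * g⁻¹ = x * f x := by
    rw [← MulAut.conj_apply, ← hg, hf.toMulAut_apply]
  have hgC : g ∈ centralizer (N : Set G) := mem_centralizer_iff.mpr fun n hn =>
    (mul_inv_eq_iff_eq_mul.mp (by rw [hconj, hf.apply_eq_one_of_mem hn, mul_one])).symm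
  refine ⟨g, hgC, funext fun q => QuotientGroup.induction_on q fun x => ?_⟩
  rw [innerDerivation_mk, eq_comm, ← inv_mul_eq_iff_eq_mul.mpr (hconj x)]
  group

theorem mem_range_innerDerivationHom_iff {p : ℕ} [Fact p.Prime]
    (hCN : centralizer (N : Set G) ≤ N)
    (hinner : ∀ α : MulAut G, orderOf α = p → (∀ x ∈ N, α x = x) → ∃ g : G, α = MulAut.conj g)
    {A Astar : Subgroup G} (hA : ∀ x, x ∈ A ↔ x ∈ centralizer (N : Set G) ∧ x ^ p = 1)
    (hAstar : ∀ x, x ∈ Astar ↔ x ∈ centralizer (N : Set G) ∧ x ^ p ∈ center G) (i : ℕ)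
    (hS : Astar ⊓ Subgroup.upperCentralSeries G (i + 1) ≤ centralizer (N : Set G))
    {f : G ⧸ N → G} :
    f ∈ (innerDerivationHom hCN hS).range ↔
      (∀ q, f q ∈ A ⊓ Subgroup.upperCentralSeries G i) ∧ IsDerivation f := by
  constructor
  · rintro ⟨⟨g, hgAstar, hgZ⟩, rfl⟩
    obtain ⟨hgC, hgp⟩ := (hAstar g).mp hgAstar
    refine ⟨fun q => ⟨(hA _).mpr ⟨innerDerivation_mem_centralizer hgC q, ?_⟩, ?_⟩,
      isDerivation_innerDerivation hgC⟩
    · exact (forall_innerDerivation_pow_eq_one_iff hCN hgC p).mpr hgp q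
    · exact (forall_innerDerivation_mem_upperCentralSeries_iff hgC i).mpr hgZ q
  · rintro ⟨hfAZ, hf⟩
    have hfA q := (hA (f q)).mp (hfAZ q).1
    obtain ⟨g, hgC, rfl⟩ :=
      hf.exists_innerDerivation_eq hinner (fun q => hCN (hfA q).1) fun q => (hfA q).2
    refine ⟨⟨g, (hAstar g).mpr ⟨hgC, ?_⟩, ?_⟩, rfl⟩
    · exact (forall_innerDerivation_pow_eq_one_iff hCN hgC p).mp fun q => (hfA q).2
    · exact (forall_innerDerivation_mem_upperCentralSeries_iff hgC i).mp fun q => (hfAZ q).2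

end

theorem stmt15_general {p : ℕ} [Fact p.Prime] {G : Type*} [Group G]
    (N : Subgroup G) [N.Normal]
    (hCN : Subgroup.centralizer (N : Set G) ≤ N)
    (ZN A Astar : Subgroup G)
    (hZN : ZN = Subgroup.centralizer (N : Set G) ⊓ N)
    (hA : A = Subgroup.closure {x : G | x ∈ ZN ∧ x ^ p = 1})
    (hAstar : Astar = Subgroup.closure {x : G | x ∈ ZN ∧ x ^ p ∈ Subgroup.center G})
    (hinner : ∀ α : MulAut G, orderOf α = p → (∀ x ∈ N, α x = x) →
      ∃ g : G, α = MulAut.conj g) :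
    ∀ i : ℕ, 1 ≤ i →
      ∃ e : {f : G ⧸ N → G //
              (∀ q, f q ∈ A ⊓ upperCentralSeries G i) ∧
              ∀ g h : G, f (QuotientGroup.mk (g * h)) =
                h⁻¹ * f (QuotientGroup.mk g) * h * f (QuotientGroup.mk h)} ≃
            ((Astar ⊓ upperCentralSeries G (i + 1)).map
              (QuotientGroup.mk' (Subgroup.center G))),
        ∀ f₁ f₂ (hprod : (∀ q, (f₁.1 * f₂.1) q ∈ A ⊓ upperCentralSeries G i) ∧
            ∀ g h : G, (f₁.1 * f₂.1) (QuotientGroup.mk (g * h)) =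
              h⁻¹ * (f₁.1 * f₂.1) (QuotientGroup.mk g) * h *
                (f₁.1 * f₂.1) (QuotientGroup.mk h)),
          e ⟨f₁.1 * f₂.1, hprod⟩ = e f₁ * e f₂ := by
  intro i _
  obtain rfl : ZN = Subgroup.centralizer (N : Set G) := hZN.trans (inf_eq_left.mpr hCN)
  set C := Subgroup.centralizer (N : Set G)
  have hcomm (a) (ha : a ∈ C) (b) (hb : b ∈ C) : Commute a b :=
    commute_of_mem_centralizer hCN ha hb
  have hA' (x : G) : x ∈ A ↔ x ∈ C ∧ x ^ p = 1 := by
    simpa [hA] using mem_closure_setOf_pow_mem_iff hcomm ⊥ p (x := x)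
  have hAstar' (x : G) : x ∈ Astar ↔ x ∈ C ∧ x ^ p ∈ Subgroup.center G := by
    simpa [hAstar] using mem_closure_setOf_pow_mem_iff hcomm (Subgroup.center G) p (x := x)
  set S := Astar ⊓ Subgroup.upperCentralSeries G (i + 1)
  have hS : S ≤ C := fun g hg => ((hAstar' g).mp hg.1).1
  have hrange : ((QuotientGroup.mk' (Subgroup.center G)).comp S.subtype).range =
      S.map (QuotientGroup.mk' (Subgroup.center G)) := by
    rw [MonoidHom.range_comp, Subgroup.range_subtype]
  let ψ : (innerDerivationHom hCN hS).range ≃* S.map (QuotientGroup.mk' (Subgroup.center G)) :=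
    (MonoidHom.rangeMulEquivOfKerEq _ _ (ker_innerDerivationHom hCN hS)).trans
      (MulEquiv.subgroupCongr hrange)
  have hmem (f : G ⧸ N → G) :=
    (mem_range_innerDerivationHom_iff hCN hinner hA' hAstar' i hS (f := f)).symm
  refine ⟨(Equiv.subtypeEquivRight hmem).trans ψ.toEquiv, fun f₁ f₂ _ => ?_⟩
  exact map_mul ψ ⟨f₁.1, (hmem _).mp f₁.2⟩ ⟨f₂.1, (hmem _).mp f₂.2⟩

/-- Let `G` be a finite `p`-group, `N` a normal subgroup with
`C_G(N) = Z(N)`, `A = Ω₁(Z(N))`, `A* = {a ∈ Z(N) : a^p ∈ Z(G)}`.  Suppose every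
automorphism of `G` of order `p` fixing `N` elementwise is inner.  Then for all
`i ≥ 1` there is a group isomorphism
`Z¹(G/N, A ∩ Z_i(G)) ≅ (A* ∩ Z_{i+1}(G))/Z(G)`, the latter realized as the image
of `A* ∩ Z_{i+1}(G)` in `G/Z(G)`. -/
theorem stmt15 {p : ℕ} [Fact p.Prime] {G : Type*} [Group G] [Finite G]
    (hG : IsPGroup p G) (N : Subgroup G) [N.Normal]
    (hCN : Subgroup.centralizer (N : Set G) ≤ N)
    (ZN A Astar : Subgroup G)
    (hZN : ZN = Subgroup.centralizer (N : Set G) ⊓ N)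
    (hA : A = Subgroup.closure {x : G | x ∈ ZN ∧ x ^ p = 1})
    (hAstar : Astar = Subgroup.closure {x : G | x ∈ ZN ∧ x ^ p ∈ Subgroup.center G})
    (hinner : ∀ α : MulAut G, orderOf α = p → (∀ x ∈ N, α x = x) →
      ∃ g : G, α = MulAut.conj g) :
    ∀ i : ℕ, 1 ≤ i →
      ∃ e : {f : G ⧸ N → G //
              (∀ q, f q ∈ A ⊓ upperCentralSeries G i) ∧
              ∀ g h : G, f (QuotientGroup.mk (g * h)) =
                h⁻¹ * f (QuotientGroup.mk g) * h * f (QuotientGroup.mk h)} ≃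
            ((Astar ⊓ upperCentralSeries G (i + 1)).map
              (QuotientGroup.mk' (Subgroup.center G))),
        ∀ f₁ f₂ (hprod : (∀ q, (f₁.1 * f₂.1) q ∈ A ⊓ upperCentralSeries G i) ∧
            ∀ g h : G, (f₁.1 * f₂.1) (QuotientGroup.mk (g * h)) =
              h⁻¹ * (f₁.1 * f₂.1) (QuotientGroup.mk g) * h *
                (f₁.1 * f₂.1) (QuotientGroup.mk h)),
          e ⟨f₁.1 * f₂.1, hprod⟩ = e f₁ * e f₂ :=
  stmt15_general N hCN ZN A Astar hZN hA hAstar hinner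
end

section
/- Let G be a group, M ≤ Z₄(G) an abelian normal subgroup, and δ : G → M a derivation with respect to the conjugation action (where [x,y] ∈ γ₂(G) acts on M by conjugation). For x, y ∈ G with δ(x) = a₁, δ(y) = a₂, one has δ([y,x]) = [a₂,x][y,a₁][y,x,a₂][y,x,a₁][y,x,[a₁,y]]. -/
/-!
Expanding `δ(y⁻¹x⁻¹yx)` with the product rule and `δ(g⁻¹) = (δ(g)⁻¹)^(g⁻¹)` gives, with `c = [y,x]`,
`δ(c) = (a₂⁻¹)^c (a₁⁻¹)^(yc) a₂^x a₁`. Each commutator on the right-hand side is likewise a product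
of conjugates of `a₁^{±1}` and `a₂^{±1}`; these all lie in the abelian normal subgroup `M`, where
the two products agree after cancellation.
-/

/-- Left-normed commutator with the convention `[g,h] = g⁻¹h⁻¹gh`. -/
def pc {G : Type*} [Group G] (g h : G) : G := g⁻¹ * h⁻¹ * g * h

section Derivation

variable {G : Type*} [Group G] {δ : G → G}
  (hδ : ∀ g h : G, δ (g * h) = h⁻¹ * δ g * h * δ h)
include hδ

theorem derivation_one : δ 1 = 1 := by
  simpa using hδ 1 1

theorem derivation_inv (g : G) : δ g⁻¹ = g * (δ g)⁻¹ * g⁻¹ := by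
  have h := hδ g⁻¹ g
  rw [inv_mul_cancel, derivation_one hδ, eq_comm, mul_eq_one_iff_eq_inv] at h
  rw [← h]
  group

theorem derivation_pc (x y : G) :
    δ (pc y x) = (pc y x)⁻¹ * (δ y)⁻¹ * pc y x * ((y * pc y x)⁻¹ * (δ x)⁻¹ * (y * pc y x)) *
      (x⁻¹ * δ y * x) * δ x := by
  rw [pc, hδ, hδ, hδ, derivation_inv hδ, derivation_inv hδ]
  group

end Derivation

theorem pc_product_of_mem_abelian_normal {G : Type*} [Group G] {M : Subgroup G} [M.Normal]
    (habel : ∀ a ∈ M, ∀ b ∈ M, a * b = b * a) {a₁ a₂ : G} (ha₁ : a₁ ∈ M) (ha₂ : a₂ ∈ M)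
    (x y : G) :
    pc a₂ x * pc y a₁ * pc (pc y x) a₂ * pc (pc y x) a₁ * pc (pc y x) (pc a₁ y) =
      (pc y x)⁻¹ * a₂⁻¹ * pc y x * ((y * pc y x)⁻¹ * a₁⁻¹ * (y * pc y x)) *
        (x⁻¹ * a₂ * x) * a₁ := by
  let _ : CommGroup M :=
    { (inferInstance : Group M) with mul_comm := fun a b => Subtype.ext (habel a a.2 b b.2) }
  set c := pc y x
  let conj (g : G) (a : M) : M := MulAut.conjNormal g⁻¹ a
  let A₁ : M := ⟨a₁, ha₁⟩
  let A₂ : M := ⟨a₂, ha₂⟩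
  have hlhs : pc a₂ x * pc y a₁ * pc c a₂ * pc c a₁ * pc c (pc a₁ y) =
      ↑(A₂⁻¹ * conj x A₂ * ((conj y A₁)⁻¹ * A₁) * ((conj c A₂)⁻¹ * A₂) * ((conj c A₁)⁻¹ * A₁) *
        ((conj (y * c) A₁)⁻¹ * conj c A₁ * A₁⁻¹ * conj y A₁)) := by
    simp only [conj, A₁, A₂, pc, c, Subgroup.coe_mul, InvMemClass.coe_inv,
      MulAut.conjNormal_apply, inv_inv]
    group
  have hrhs : c⁻¹ * a₂⁻¹ * c * ((y * c)⁻¹ * a₁⁻¹ * (y * c)) * (x⁻¹ * a₂ * x) * a₁ =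
      ↑((conj c A₂)⁻¹ * (conj (y * c) A₁)⁻¹ * conj x A₂ * A₁) := by
    simp only [conj, A₁, A₂, Subgroup.coe_mul, InvMemClass.coe_inv,
      MulAut.conjNormal_apply, inv_inv]
    group
  rw [hlhs, hrhs]
  congr 1
  apply Additive.ofMul.injective
  simp only [ofMul_mul, ofMul_inv]
  abel

theorem stmt17_general {G : Type*} [Group G] (M : Subgroup G) (hnorm : M.Normal)
    (habel : ∀ a ∈ M, ∀ b ∈ M, a * b = b * a)
    (δ : G → G) (hmem : ∀ g : G, δ g ∈ M)
    (hδ : ∀ g h : G, δ (g * h) = h⁻¹ * δ g * h * δ h)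
    (x y : G) (a₁ a₂ : G) (ha₁ : a₁ = δ x) (ha₂ : a₂ = δ y) :
    δ (pc y x) =
      pc a₂ x * pc y a₁ * pc (pc y x) a₂ * pc (pc y x) a₁ *
        pc (pc y x) (pc a₁ y) := by
  subst ha₁ ha₂
  rw [derivation_pc hδ, pc_product_of_mem_abelian_normal habel (hmem x) (hmem y)]

/-- Let `G` be a group, `M ≤ Z₄(G)` an abelian normal subgroup, and
`δ : G → M` a derivation with respect to the conjugation action.  For `x, y ∈ G`
with `δ(x) = a₁`, `δ(y) = a₂`, one has
`δ([y,x]) = [a₂,x][y,a₁][y,x,a₂][y,x,a₁][y,x,[a₁,y]]`,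
with left-normed commutators `[g,h] = g⁻¹h⁻¹gh`. -/
theorem stmt17 {G : Type*} [Group G] (M : Subgroup G) (hnorm : M.Normal)
    (habel : ∀ a ∈ M, ∀ b ∈ M, a * b = b * a)
    (hM4 : M ≤ upperCentralSeries G 4)
    (δ : G → G) (hmem : ∀ g : G, δ g ∈ M)
    (hδ : ∀ g h : G, δ (g * h) = h⁻¹ * δ g * h * δ h)
    (x y : G) (a₁ a₂ : G) (ha₁ : a₁ = δ x) (ha₂ : a₂ = δ y) :
    δ (pc y x) =
      pc a₂ x * pc y a₁ * pc (pc y x) a₂ * pc (pc y x) a₁ *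
        pc (pc y x) (pc a₁ y) :=
  stmt17_general M hnorm habel δ hmem hδ x y a₁ a₂ ha₁ ha₂
end
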